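/- The supremum $V = \sup \{ \int_0^\infty [-2h y'(h)^2 - h y(h)^2]\,dh : y \in L^2[0,\infty) \cap C^2[0,\infty),\ \|y\|_{L^2} = 1 \}$ equals $-\sqrt{2}$, attained by $y^*(h) = \frac{1}{\sqrt{2}} e^{-h/\sqrt{2}}$. -/

import Mathlib

/-!
Integrating `(h y²)' = y² + 2 h y y'` over `(0, ∞)` gives `∫ h y y' = -½ ∫ y²`, so completing
the square turns the objective into `-∫ 2h (y' + y/√2)² - √2 ∫ y²`. For unit-norm `y` this is at
most `-√2`, with equality exactly when `y' = -y/√2`, i.e. for `y = 2^{1/4} e^{-h/√2}`.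
-/

open MeasureTheory Set Filter Real Topology

theorem integral_Ioi_mul_mul_deriv {y : ℝ → ℝ} (hy : Differentiable ℝ y)
    (hy2 : IntegrableOn (fun h => y h ^ 2) (Ioi 0))
    (hyy' : IntegrableOn (fun h => h * y h * deriv y h) (Ioi 0))
    (hlim : Tendsto (fun h => h * y h ^ 2) atTop (𝓝 0)) :
    ∫ h in Ioi (0:ℝ), h * y h * deriv y h = -(1 / 2) * ∫ h in Ioi (0:ℝ), y h ^ 2 := by
  have hderiv : ∀ h ∈ Ici (0:ℝ), HasDerivAt (fun h => h * y h ^ 2)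
      (y h ^ 2 + 2 * (h * y h * deriv y h)) h := fun h _ => by
    refine ((hasDerivAt_id' h).mul ((hy h).hasDerivAt.pow 2)).congr_deriv ?_
    simp only [Pi.pow_apply, Nat.cast_ofNat]
    ring
  have hftc := integral_Ioi_of_hasDerivAt_of_tendsto' hderiv (hy2.add (hyy'.const_mul 2)) hlim
  rw [integral_add hy2 (hyy'.const_mul 2), integral_const_mul] at hftc
  simp only [zero_mul, sub_zero] at hftc
  linarith

theorem neg_two_mul_mul_sq_sub_mul_sq (h d u : ℝ) :
    -2 * h * d ^ 2 - h * u ^ 2 = -(2 * h * (d + u / √2) ^ 2) + 2 * √2 * (h * u * d) := by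
  have hs : √2 ^ 2 = 2 := sq_sqrt zero_le_two
  field_simp
  linear_combination (-(h * u ^ 2) - 2 * √2 * h * u * d) * hs

theorem integral_Ioi_objective_eq {y : ℝ → ℝ} (hy : Differentiable ℝ y)
    (hy2 : IntegrableOn (fun h => y h ^ 2) (Ioi 0))
    (hobj : IntegrableOn (fun h => -2 * h * deriv y h ^ 2 - h * y h ^ 2) (Ioi 0))
    (hyy' : IntegrableOn (fun h => h * y h * deriv y h) (Ioi 0))
    (hlim : Tendsto (fun h => h * y h ^ 2) atTop (𝓝 0)) :
    ∫ h in Ioi (0:ℝ), (-2 * h * deriv y h ^ 2 - h * y h ^ 2) =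
      -(∫ h in Ioi (0:ℝ), 2 * h * (deriv y h + y h / √2) ^ 2) -
        √2 * ∫ h in Ioi (0:ℝ), y h ^ 2 := by
  have hsq : IntegrableOn (fun h => 2 * h * (deriv y h + y h / √2) ^ 2) (Ioi 0) := by
    refine IntegrableOn.congr_fun ((hyy'.const_mul (2 * √2)).sub hobj) (fun h _ => ?_)
      measurableSet_Ioi
    simp only [Pi.sub_apply, neg_two_mul_mul_sq_sub_mul_sq]
    ring
  have hsplit : ∫ h in Ioi (0:ℝ), (-2 * h * deriv y h ^ 2 - h * y h ^ 2) =
      -(∫ h in Ioi (0:ℝ), 2 * h * (deriv y h + y h / √2) ^ 2) +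
        2 * √2 * ∫ h in Ioi (0:ℝ), h * y h * deriv y h := by
    rw [← integral_neg, ← integral_const_mul, ← integral_add]
    · simp only [neg_two_mul_mul_sq_sub_mul_sq]
    · exact hsq.neg
    · exact hyy'.const_mul _
  rw [hsplit, integral_Ioi_mul_mul_deriv hy hy2 hyy' hlim]
  ring

noncomputable def optimalProfile (h : ℝ) : ℝ := √√2 * exp (-(h / √2))

theorem hasDerivAt_optimalProfile (h : ℝ) :
    HasDerivAt optimalProfile (-(optimalProfile h / √2)) h := by
  refine ((((hasDerivAt_id' h).div_const √2).neg.exp).const_mul √√2).congr_deriv ?_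
  simp only [optimalProfile, Pi.neg_apply]
  ring

theorem deriv_optimalProfile : deriv optimalProfile = fun h => -(optimalProfile h / √2) :=
  funext fun h => (hasDerivAt_optimalProfile h).deriv

theorem optimalProfile_sq (h : ℝ) : optimalProfile h ^ 2 = √2 * exp (-√2 * h) := by
  have hs : √2 ^ 2 = 2 := sq_sqrt zero_le_two
  rw [optimalProfile, mul_pow, sq_sqrt (sqrt_nonneg 2), ← exp_nat_mul]
  congr 2
  field_simp
  linear_combination h * hs

theorem integrableOn_optimalProfile_sq :
    IntegrableOn (fun h => optimalProfile h ^ 2) (Ioi 0) := by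
  simp only [optimalProfile_sq]
  exact (integrableOn_exp_mul_Ioi (by simp) 0).const_mul _

theorem integral_optimalProfile_sq : ∫ h in Ioi (0:ℝ), optimalProfile h ^ 2 = 1 := by
  simp only [optimalProfile_sq]
  rw [integral_const_mul, integral_exp_mul_Ioi (by simp)]
  field_simp
  simp

theorem integrableOn_mul_optimalProfile_sq :
    IntegrableOn (fun h => h * optimalProfile h ^ 2) (Ioi 0) := by
  have := (integrableOn_rpow_mul_exp_neg_mul_rpow (s := 1) (p := 1) (b := √2) (by norm_num)
    one_pos (by simp)).const_mul √2
  refine IntegrableOn.congr_fun this (fun h _ => ?_) measurableSet_Ioi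
  simp only [rpow_one, optimalProfile_sq]
  ring

theorem tendsto_mul_optimalProfile_sq :
    Tendsto (fun h => h * optimalProfile h ^ 2) atTop (𝓝 0) := by
  have := (tendsto_rpow_mul_exp_neg_mul_atTop_nhds_zero 1 √2 (by simp)).const_mul √2
  rw [mul_zero] at this
  refine this.congr fun h => ?_
  simp only [rpow_one, optimalProfile_sq]
  ring

theorem integrableOn_objective_optimalProfile :
    IntegrableOn (fun h => -2 * h * deriv optimalProfile h ^ 2 - h * optimalProfile h ^ 2)
      (Ioi 0) := by
  refine IntegrableOn.congr_fun (integrableOn_mul_optimalProfile_sq.const_mul (-2))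
    (fun h _ => ?_) measurableSet_Ioi
  rw [deriv_optimalProfile, neg_sq, div_pow, sq_sqrt zero_le_two]
  ring

theorem integrableOn_mul_optimalProfile_mul_deriv :
    IntegrableOn (fun h => h * optimalProfile h * deriv optimalProfile h) (Ioi 0) := by
  refine IntegrableOn.congr_fun (integrableOn_mul_optimalProfile_sq.neg.div_const √2)
    (fun h _ => ?_) measurableSet_Ioi
  rw [deriv_optimalProfile]
  simp only [Pi.neg_apply]
  ring

/-- The variational problem `V = sup { ∫_0^∞ [-2h y'(h)² - h y(h)²] dh : ‖y‖₂ = 1 }`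
has value `-√2`, attained by `y*(h) = (1/√2) e^{-h/√2}`. -/
theorem stmt3 :
    IsGreatest {V : ℝ | ∃ y : ℝ → ℝ, ContDiff ℝ 2 y ∧
      IntegrableOn (fun h => (y h) ^ 2) (Ioi 0) ∧
      (∫ h in Ioi (0:ℝ), (y h) ^ 2) = 1 ∧
      IntegrableOn (fun h => -2 * h * (deriv y h) ^ 2 - h * (y h) ^ 2) (Ioi 0) ∧
      IntegrableOn (fun h => h * y h * deriv y h) (Ioi 0) ∧
      Tendsto (fun h => h * (y h) ^ 2) atTop (nhds 0) ∧
      V = ∫ h in Ioi (0:ℝ), (-2 * h * (deriv y h) ^ 2 - h * (y h) ^ 2)}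
    (-Real.sqrt 2) := by
  constructor
  · refine ⟨optimalProfile, by unfold optimalProfile; fun_prop, integrableOn_optimalProfile_sq,
      integral_optimalProfile_sq, integrableOn_objective_optimalProfile,
      integrableOn_mul_optimalProfile_mul_deriv, tendsto_mul_optimalProfile_sq, ?_⟩
    rw [integral_Ioi_objective_eq (fun h => (hasDerivAt_optimalProfile h).differentiableAt)
      integrableOn_optimalProfile_sq integrableOn_objective_optimalProfile
      integrableOn_mul_optimalProfile_mul_deriv tendsto_mul_optimalProfile_sq,
      integral_optimalProfile_sq, deriv_optimalProfile]
    simp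
  · rintro V ⟨y, hy, hy2, hnorm, hobj, hyy', hlim, rfl⟩
    rw [integral_Ioi_objective_eq (hy.differentiable two_ne_zero) hy2 hobj hyy' hlim, hnorm,
      mul_one, neg_sub_left, neg_le_neg_iff]
    exact le_add_of_nonneg_right <| setIntegral_nonneg measurableSet_Ioi fun h hh =>
      mul_nonneg (mul_nonneg zero_le_two hh.le) (sq_nonneg _)
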